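/- arXiv:2003.14317 — 3 statements merged into one kernel-verified Lean document; each statement's English description precedes it below -/
import Mathlib

section
/- If vertices (u1,u2,u3,u4) induce a C4 in G (with edges u1u2, u2u3, u3u4, u4u1 and non-edges u1u3, u2u4), then any edit set E ⊆ pairs({u1,u2,u3,u4}) whose application makes the four vertices induce a {C4,P4}-free graph must contain at least one of the diagonals {u1,u3}, {u2,u4}, or at least two of the four cycle edges. -/
/-! If neither diagonal is edited, both stay non-edges; if moreover at most one cycle edge is
edited, three consecutive cycle edges survive. These form a chordless path, which is an induced
`C₄` or an induced `P₄` according to whether the fourth cycle edge survives. -/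

/-- Editing a simple graph at a set of vertex pairs: toggle adjacency on those pairs. -/
def editGraph {V : Type*} (G : SimpleGraph V) (E : Set (Sym2 V)) : SimpleGraph V :=
  SimpleGraph.fromEdgeSet (symmDiff G.edgeSet E)

open SimpleGraph

theorem Finset.three_consecutive_notMem_of_card_inter_lt_two {α : Type*} [DecidableEq α]
    {s : Finset α} {a b c d : α} (hab : a ≠ b) (hac : a ≠ c) (had : a ≠ d) (hbc : b ≠ c)
    (hbd : b ≠ d) (hcd : c ≠ d) (h : (s ∩ {a, b, c, d}).card < 2) :
    (a ∉ s ∧ b ∉ s ∧ c ∉ s) ∨ (b ∉ s ∧ c ∉ s ∧ d ∉ s) ∨ (c ∉ s ∧ d ∉ s ∧ a ∉ s) ∨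
      (d ∉ s ∧ a ∉ s ∧ b ∉ s) := by
  have h := Finset.card_le_one.mp (Nat.le_of_lt_succ h)
  simp only [Finset.mem_inter, Finset.mem_insert, Finset.mem_singleton] at h
  grind

section

variable {V W : Type*}

theorem editGraph_adj_iff_of_notMem {G : SimpleGraph V} {E : Set (Sym2 V)} {a b : V}
    (h : s(a, b) ∉ E) : (editGraph G E).Adj a b ↔ G.Adj a b := by
  simp only [editGraph, fromEdgeSet_adj, Set.mem_symmDiff, mem_edgeSet, h, not_false_eq_true,
    and_true, false_and, or_false]
  exact and_iff_left_of_imp Adj.ne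

theorem nonempty_cycleGraph_four_or_pathGraph_four_embedding {H : SimpleGraph W}
    {a b c d : W} (hac : a ≠ c) (hbd : b ≠ d) (hab : H.Adj a b) (hbc : H.Adj b c)
    (hcd : H.Adj c d) (nac : ¬ H.Adj a c) (nbd : ¬ H.Adj b d) :
    Nonempty (cycleGraph 4 ↪g H) ∨ Nonempty (pathGraph 4 ↪g H) := by
  have had : a ≠ d := by rintro rfl; exact nac hcd.symm
  have hinj : Function.Injective ![a, b, c, d] := by
    intro i j h
    fin_cases i <;> fin_cases j <;>
      simp_all [hab.ne, hbc.ne, hcd.ne, hab.ne', hbc.ne', hcd.ne', had.symm, hac.symm, hbd.symm]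
  have nca : ¬ H.Adj c a := fun h => nac h.symm
  have ndb : ¬ H.Adj d b := fun h => nbd h.symm
  by_cases hda : H.Adj d a
  · refine Or.inl ⟨⟨⟨_, hinj⟩, fun {i j} => ?_⟩⟩
    fin_cases i <;> fin_cases j <;>
      simp [cycleGraph_adj', hab, hbc, hcd, hda, hab.symm, hbc.symm, hcd.symm, hda.symm,
        nac, nbd, nca, ndb] <;> decide
  · have nad : ¬ H.Adj a d := fun h => hda h.symm
    refine Or.inr ⟨⟨⟨_, hinj⟩, fun {i j} => ?_⟩⟩
    fin_cases i <;> fin_cases j <;>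
      simp [pathGraph_adj, hab, hbc, hcd, hab.symm, hbc.symm, hcd.symm,
        nac, nbd, nca, ndb, hda, nad]

theorem nonempty_cycleGraph_four_or_pathGraph_four_embedding_induce_editGraph
    {G : SimpleGraph V} {E : Set (Sym2 V)} {S : Set V} {a b c d : V}
    (ha : a ∈ S) (hb : b ∈ S) (hc : c ∈ S) (hd : d ∈ S) (hac : a ≠ c) (hbd : b ≠ d)
    (hab : G.Adj a b) (hbc : G.Adj b c) (hcd : G.Adj c d) (nac : ¬ G.Adj a c) (nbd : ¬ G.Adj b d)
    (eab : s(a, b) ∉ E) (ebc : s(b, c) ∉ E) (ecd : s(c, d) ∉ E) (eac : s(a, c) ∉ E)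
    (ebd : s(b, d) ∉ E) :
    Nonempty (cycleGraph 4 ↪g (editGraph G E).induce S) ∨
      Nonempty (pathGraph 4 ↪g (editGraph G E).induce S) :=
  nonempty_cycleGraph_four_or_pathGraph_four_embedding
    (a := ⟨a, ha⟩) (b := ⟨b, hb⟩) (c := ⟨c, hc⟩) (d := ⟨d, hd⟩)
    (by simpa using hac) (by simpa using hbd)
    ((editGraph_adj_iff_of_notMem eab).mpr hab) ((editGraph_adj_iff_of_notMem ebc).mpr hbc)
    ((editGraph_adj_iff_of_notMem ecd).mpr hcd) (mt (editGraph_adj_iff_of_notMem eac).mp nac)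
    (mt (editGraph_adj_iff_of_notMem ebd).mp nbd)

end

theorem c4_constraint_valid_general {V : Type*} [DecidableEq V] (G : SimpleGraph V)
    (u₁ u₂ u₃ u₄ : V)
    (hne : u₁ ≠ u₂ ∧ u₁ ≠ u₃ ∧ u₁ ≠ u₄ ∧ u₂ ≠ u₃ ∧ u₂ ≠ u₄ ∧ u₃ ≠ u₄)
    (h12 : G.Adj u₁ u₂) (h23 : G.Adj u₂ u₃) (h34 : G.Adj u₃ u₄) (h41 : G.Adj u₄ u₁)
    (h13 : ¬ G.Adj u₁ u₃) (h24 : ¬ G.Adj u₂ u₄)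
    (E : Finset (Sym2 V))
    (hfree :
      IsEmpty (SimpleGraph.cycleGraph 4 ↪g
        (editGraph G (E : Set (Sym2 V))).induce ({u₁, u₂, u₃, u₄} : Set V)) ∧
      IsEmpty (SimpleGraph.pathGraph 4 ↪g
        (editGraph G (E : Set (Sym2 V))).induce ({u₁, u₂, u₃, u₄} : Set V))) :
    s(u₁, u₃) ∈ E ∨ s(u₂, u₄) ∈ E ∨
      2 ≤ (E ∩ ({s(u₁, u₂), s(u₂, u₃), s(u₃, u₄), s(u₄, u₁)} : Finset (Sym2 V))).card := by
  obtain ⟨n12, n13, n14, n23, n24, n34⟩ := hne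
  by_contra! hcon
  obtain ⟨e13, e24, hcard⟩ := hcon
  obtain ⟨d₁, d₂, d₃, d₄, d₅, d₆⟩ : s(u₁, u₂) ≠ s(u₂, u₃) ∧ s(u₁, u₂) ≠ s(u₃, u₄) ∧
      s(u₁, u₂) ≠ s(u₄, u₁) ∧ s(u₂, u₃) ≠ s(u₃, u₄) ∧ s(u₂, u₃) ≠ s(u₄, u₁) ∧
      s(u₃, u₄) ≠ s(u₄, u₁) := by
    simp [n12, n13, n14, n23, n24, n34, n13.symm]
  have e31 : s(u₃, u₁) ∉ E := by rwa [Sym2.eq_swap]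
  have e42 : s(u₄, u₂) ∉ E := by rwa [Sym2.eq_swap]
  have h31 : ¬ G.Adj u₃ u₁ := fun h => h13 h.symm
  have h42 : ¬ G.Adj u₄ u₂ := fun h => h24 h.symm
  obtain ⟨m₁, m₂, m₃, m₄⟩ : u₁ ∈ ({u₁, u₂, u₃, u₄} : Set V) ∧ u₂ ∈ ({u₁, u₂, u₃, u₄} : Set V) ∧
      u₃ ∈ ({u₁, u₂, u₃, u₄} : Set V) ∧ u₄ ∈ ({u₁, u₂, u₃, u₄} : Set V) := by simp
  refine not_or.mpr ⟨not_nonempty_iff.mpr hfree.1, not_nonempty_iff.mpr hfree.2⟩ ?_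
  rcases Finset.three_consecutive_notMem_of_card_inter_lt_two d₁ d₂ d₃ d₄ d₅ d₆ hcard with
    ⟨e12, e23, e34⟩ | ⟨e23, e34, e41⟩ | ⟨e34, e41, e12⟩ | ⟨e41, e12, e23⟩
  · exact nonempty_cycleGraph_four_or_pathGraph_four_embedding_induce_editGraph
      m₁ m₂ m₃ m₄ n13 n24 h12 h23 h34 h13 h24 e12 e23 e34 e13 e24
  · exact nonempty_cycleGraph_four_or_pathGraph_four_embedding_induce_editGraph
      m₂ m₃ m₄ m₁ n24 n13.symm h23 h34 h41 h24 h31 e23 e34 e41 e24 e31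
  · exact nonempty_cycleGraph_four_or_pathGraph_four_embedding_induce_editGraph
      m₃ m₄ m₁ m₂ n13.symm n24.symm h34 h41 h12 h31 h42 e34 e41 e12 e31 e42
  · exact nonempty_cycleGraph_four_or_pathGraph_four_embedding_induce_editGraph
      m₄ m₁ m₂ m₃ n24.symm n13 h41 h12 h23 h42 h13 e41 e12 e23 e42 e13

/-- Validity of the specialized ILP constraint for an induced `C₄`: any edit set on the
four vertices making them induce a `{C₄, P₄}`-free graph contains a diagonal or at
least two of the four cycle edges. -/
theorem c4_constraint_valid {V : Type*} [Fintype V] [DecidableEq V] (G : SimpleGraph V)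
    (u₁ u₂ u₃ u₄ : V)
    (hne : u₁ ≠ u₂ ∧ u₁ ≠ u₃ ∧ u₁ ≠ u₄ ∧ u₂ ≠ u₃ ∧ u₂ ≠ u₄ ∧ u₃ ≠ u₄)
    (h12 : G.Adj u₁ u₂) (h23 : G.Adj u₂ u₃) (h34 : G.Adj u₃ u₄) (h41 : G.Adj u₄ u₁)
    (h13 : ¬ G.Adj u₁ u₃) (h24 : ¬ G.Adj u₂ u₄)
    (E : Finset (Sym2 V))
    (hE : ∀ e ∈ E, ∀ v ∈ e, v ∈ ({u₁, u₂, u₃, u₄} : Set V))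
    (hfree :
      IsEmpty (SimpleGraph.cycleGraph 4 ↪g
        (editGraph G (E : Set (Sym2 V))).induce ({u₁, u₂, u₃, u₄} : Set V)) ∧
      IsEmpty (SimpleGraph.pathGraph 4 ↪g
        (editGraph G (E : Set (Sym2 V))).induce ({u₁, u₂, u₃, u₄} : Set V))) :
    s(u₁, u₃) ∈ E ∨ s(u₂, u₄) ∈ E ∨
      2 ≤ (E ∩ ({s(u₁, u₂), s(u₂, u₃), s(u₃, u₄), s(u₄, u₁)} : Finset (Sym2 V))).card :=
  c4_constraint_valid_general G u₁ u₂ u₃ u₄ hne h12 h23 h34 h41 h13 h24 E hfree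
end

section
/- A graph G is {C4,P4}-free if and only if every nonempty connected induced subgraph of G contains a universal vertex (a vertex adjacent to all other vertices of that subgraph). -/
/-!
Let `v` be a vertex of maximum degree in a connected `{C₄, P₄}`-free graph. If `v` were not
universal, connectivity would give a path `v - w - u` with `u` not adjacent to `v`. Since `w` has
the neighbour `u` outside `N[v]` but degree at most that of `v`, some neighbour `x ≠ w` of `v` is
not adjacent to `w`, and `v x u w` is an induced `C₄` or `x v w u` an induced `P₄`.
Conversely, `C₄` and `P₄` are connected and have no universal vertex.
-/

namespace SimpleGraph

variable {V α : Type*} {G : SimpleGraph V}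

lemma Connected.exists_adj_adj_not_adj (hG : G.Connected) {v : V} (hv : ¬G.IsUniversal v) :
    ∃ w u, G.Adj v w ∧ G.Adj w u ∧ v ≠ u ∧ ¬G.Adj v u := by
  obtain ⟨u, hvu, hnvu⟩ : ∃ u, v ≠ u ∧ ¬G.Adj v u := by
    simpa [IsUniversal] using hv
  obtain ⟨d, -, hd, hd'⟩ :=
    (hG.preconnected v u).some.exists_boundary_dart {x | x = v ∨ G.Adj v x} (.inl rfl)
      (by simp [hvu.symm, hnvu])
  simp only [Set.mem_ofPred_eq, not_or] at hd hd'
  rcases hd with hd | hd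
  · exact absurd (hd ▸ d.adj) hd'.2
  · exact ⟨d.fst, d.snd, hd, d.adj, Ne.symm hd'.1, hd'.2⟩

lemma exists_adj_not_adj_of_degree_le [Fintype V] [DecidableRel G.Adj] {v w u : V}
    (hvw : G.Adj v w) (hwu : G.Adj w u) (hvu : v ≠ u) (hnvu : ¬G.Adj v u)
    (hdeg : G.degree w ≤ G.degree v) : ∃ x, G.Adj v x ∧ w ≠ x ∧ ¬G.Adj w x := by
  classical
  by_contra! h
  have hsub : insert v (G.neighborFinset v) ⊂ insert w (G.neighborFinset w) := by
    refine (Finset.ssubset_iff_of_subset fun x hx ↦ ?_).2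
      ⟨u, by simp [hwu], by simp [hvu.symm, hnvu]⟩
    rcases Finset.mem_insert.1 hx with rfl | hx
    · simp [hvw.symm]
    · rw [mem_neighborFinset] at hx
      by_cases hxw : w = x
      · simp [hxw]
      · simp [h x hx hxw]
  have := Finset.card_lt_card hsub
  rw [Finset.card_insert_of_notMem (notMem_neighborFinset_self _ _),
    Finset.card_insert_of_notMem (notMem_neighborFinset_self _ _)] at this
  simp only [card_neighborFinset_eq_degree] at this
  omega

lemma nonempty_cycleGraph_four_embedding {a b c d : V}
    (hab : G.Adj a b) (hbc : G.Adj b c) (hcd : G.Adj c d) (hda : G.Adj d a)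
    (hac : ¬G.Adj a c) (hbd : ¬G.Adj b d) (hac' : a ≠ c) (hbd' : b ≠ d) :
    Nonempty (cycleGraph 4 ↪g G) := by
  refine ⟨⟨⟨![a, b, c, d], fun i j h ↦ ?_⟩, fun {i j} ↦ ?_⟩⟩
  · fin_cases i <;> fin_cases j <;>
      simp_all [hab.ne, hbc.ne, hcd.ne, hda.ne, hab.ne', hbc.ne', hcd.ne', hda.ne']
  · change G.Adj (![a, b, c, d] i) (![a, b, c, d] j) ↔ _
    fin_cases i <;> fin_cases j <;>
      simp +decide [hab, hbc, hcd, hda, hab.symm, hbc.symm, hcd.symm, hda.symm, hac, hbd,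
        mt G.adj_symm hac, mt G.adj_symm hbd]

lemma nonempty_pathGraph_four_embedding {a b c d : V}
    (hab : G.Adj a b) (hbc : G.Adj b c) (hcd : G.Adj c d)
    (hac : ¬G.Adj a c) (hbd : ¬G.Adj b d) (had : ¬G.Adj a d) (hac' : a ≠ c) (hbd' : b ≠ d) :
    Nonempty (pathGraph 4 ↪g G) := by
  have had' : a ≠ d := by rintro rfl; exact hac hcd.symm
  refine ⟨⟨⟨![a, b, c, d], fun i j h ↦ ?_⟩, fun {i j} ↦ ?_⟩⟩
  · fin_cases i <;> fin_cases j <;> simp_all [hab.ne, hbc.ne, hcd.ne, hab.ne', hbc.ne', hcd.ne']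
  · change G.Adj (![a, b, c, d] i) (![a, b, c, d] j) ↔ _
    fin_cases i <;> fin_cases j <;>
      simp +decide [pathGraph_adj, hab, hbc, hcd, hac, hbd, had, hab.symm, hbc.symm, hcd.symm,
        mt G.adj_symm hac, mt G.adj_symm hbd, mt G.adj_symm had]

lemma Connected.exists_isUniversal [Finite V] (hG : G.Connected)
    (hC : IsEmpty (cycleGraph 4 ↪g G)) (hP : IsEmpty (pathGraph 4 ↪g G)) :
    ∃ v, G.IsUniversal v := by
  classical
  have := Fintype.ofFinite V
  have := hG.nonempty
  obtain ⟨v, hv⟩ := Finite.exists_max (G.degree ·)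
  refine ⟨v, by_contra fun hnv ↦ ?_⟩
  obtain ⟨w, u, hvw, hwu, hvu, hnvu⟩ := hG.exists_adj_adj_not_adj hnv
  obtain ⟨x, hvx, hwx, hnwx⟩ := exists_adj_not_adj_of_degree_le hvw hwu hvu hnvu (hv w)
  by_cases hxu : G.Adj x u
  · exact not_nonempty_iff.2 hC <| nonempty_cycleGraph_four_embedding hvx hxu hwu.symm hvw.symm
      hnvu (mt G.adj_symm hnwx) hvu (Ne.symm hwx)
  · exact not_nonempty_iff.2 hP <| nonempty_pathGraph_four_embedding hvx.symm hvw hwu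
      (mt G.adj_symm hnwx) hnvu hxu (Ne.symm hwx) hvu

lemma Iso.isUniversal_symm_apply {W : Type*} {G' : SimpleGraph W} (e : G ≃g G') {v : W}
    (hv : G'.IsUniversal v) : G.IsUniversal (e.symm v) := by
  intro w hw
  have : v ≠ e w := by rintro rfl; simp at hw
  simpa using e.symm.map_adj_iff.2 (hv this)

lemma Embedding.exists_isUniversal {H : SimpleGraph α} (f : H ↪g G) (hH : H.Connected)
    (hG : ∀ W : Set V, (G.induce W).Connected → ∃ v, (G.induce W).IsUniversal v) :
    ∃ v, H.IsUniversal v := by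
  obtain ⟨v, hv⟩ := hG _ (f.isoInduceRange.connected_iff.1 hH)
  exact ⟨_, f.isoInduceRange.isUniversal_symm_apply hv⟩

lemma not_isUniversal_cycleGraph_four (v : Fin 4) : ¬(cycleGraph 4).IsUniversal v := by
  revert v
  unfold IsUniversal
  decide

lemma not_isUniversal_pathGraph_four (v : Fin 4) : ¬(pathGraph 4).IsUniversal v := by
  revert v
  simp only [IsUniversal, pathGraph_adj]
  decide

end SimpleGraph

open SimpleGraph

/-- Wolk's characterization: a finite graph is `{C₄, P₄}`-free iff every nonempty
connected induced subgraph has a universal vertex. -/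
theorem quasiThreshold_iff_universal_in_connected_induced {V : Type*} [Fintype V]
    (G : SimpleGraph V) :
    (IsEmpty (SimpleGraph.cycleGraph 4 ↪g G) ∧ IsEmpty (SimpleGraph.pathGraph 4 ↪g G)) ↔
      ∀ W : Set V, (G.induce W).Connected →
        ∃ v : W, ∀ u : W, u ≠ v → (G.induce W).Adj v u := by
  have universal_iff (W : Set V) : (∃ v : W, ∀ u : W, u ≠ v → (G.induce W).Adj v u) ↔
      ∃ v, (G.induce W).IsUniversal v :=
    exists_congr fun v ↦ ⟨fun h u hvu ↦ h u hvu.symm, fun h u huv ↦ h huv.symm⟩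
  simp only [universal_iff]
  refine ⟨fun ⟨hC, hP⟩ W hW ↦ hW.exists_isUniversal ?_ ?_,
    fun hG ↦ ⟨⟨fun f ↦ ?_⟩, ⟨fun f ↦ ?_⟩⟩⟩
  · exact ⟨fun f ↦ hC.false ((Embedding.induce W).comp f)⟩
  · exact ⟨fun f ↦ hP.false ((Embedding.induce W).comp f)⟩
  · obtain ⟨v, hv⟩ := f.exists_isUniversal cycleGraph_connected hG
    exact not_isUniversal_cycleGraph_four v hv
  · obtain ⟨v, hv⟩ := f.exists_isUniversal (pathGraph_connected 3) hG
    exact not_isUniversal_pathGraph_four v hv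
end

section
/- Packing lower bound with shared endpoint pairs for P4s: let S be a family of 4-tuples of vertices each inducing a P4 in G, such that for distinct members of S the sets of their five 'non-endpoint' vertex pairs (all pairs except the pair of the two degree-one vertices) are disjoint. Then any edit set making G {C4,P4}-free has size at least |S|. -/
/-- The five non-endpoint vertex pairs of a `P₄` `(a, b, c, d)`:
all pairs except the endpoint pair `{a, d}`. -/
def fivePairs {V : Type*} [DecidableEq V] (t : V × V × V × V) : Finset (Sym2 V) :=
  {s(t.1, t.2.1), s(t.2.1, t.2.2.1), s(t.2.2.1, t.2.2.2),
   s(t.1, t.2.2.1), s(t.2.1, t.2.2.2)}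

/-!
An induced `P₄` `(a, b, c, d)` of `G` whose five non-endpoint pairs are all left unedited
survives in the edited graph: as an induced `P₄` if `{a, d}` is not edited, and as an induced
`C₄` if it is. So a `{C₄, P₄}`-free edit set meets the five-pair set of every member of `S`,
and since these sets are pairwise disjoint it has at least `|S|` elements.
-/

open SimpleGraph Finset

section

variable {V : Type*}

def IsInducedP4 (G : SimpleGraph V) (a b c d : V) : Prop :=
  (a ≠ b ∧ a ≠ c ∧ a ≠ d ∧ b ≠ c ∧ b ≠ d ∧ c ≠ d) ∧
    G.Adj a b ∧ G.Adj b c ∧ G.Adj c d ∧ ¬ G.Adj a c ∧ ¬ G.Adj a d ∧ ¬ G.Adj b d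

theorem Finset.card_le_card_of_forall_not_disjoint {ι α : Type*} {s : Finset ι}
    {f : ι → Finset α} {E : Finset α} (hf : (s : Set ι).PairwiseDisjoint f)
    (hE : ∀ i ∈ s, ¬ Disjoint (f i) E) : #s ≤ #E := by
  classical
  calc #s ≤ #(s.biUnion fun i => f i ∩ E) :=
        card_le_card_biUnion (hf.mono fun _ => inter_subset_left) fun i hi =>
          not_disjoint_iff_nonempty_inter.1 (hE i hi)
    _ ≤ #E := card_le_card (biUnion_subset.2 fun _ _ => inter_subset_right)

theorem editGraph_adj_of_notMem {G : SimpleGraph V} {E : Set (Sym2 V)} {x y : V}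
    (hxy : x ≠ y) (hE : s(x, y) ∉ E) : (editGraph G E).Adj x y ↔ G.Adj x y := by
  simp [editGraph, Set.mem_symmDiff, hxy, hE]

theorem editGraph_adj_of_mem {G : SimpleGraph V} {E : Set (Sym2 V)} {x y : V}
    (hxy : x ≠ y) (hE : s(x, y) ∈ E) : (editGraph G E).Adj x y ↔ ¬ G.Adj x y := by
  simp [editGraph, Set.mem_symmDiff, hxy, hE]

theorem injective_vecCons_four {a b c d : V} (hab : a ≠ b) (hac : a ≠ c) (had : a ≠ d)
    (hbc : b ≠ c) (hbd : b ≠ d) (hcd : c ≠ d) : Function.Injective ![a, b, c, d] := by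
  intro i j h
  fin_cases i <;> fin_cases j <;> simp_all [eq_comm]

theorem nonempty_cycleGraph_four_embedding {H : SimpleGraph V} {a b c d : V}
    (hinj : Function.Injective ![a, b, c, d]) (hab : H.Adj a b) (hbc : H.Adj b c)
    (hcd : H.Adj c d) (hda : H.Adj d a) (hac : ¬ H.Adj a c) (hbd : ¬ H.Adj b d) :
    Nonempty (cycleGraph 4 ↪g H) := by
  refine ⟨⟨⟨![a, b, c, d], hinj⟩, fun {i j} => ?_⟩⟩
  fin_cases i <;> fin_cases j <;>
    simp [cycleGraph_adj, hab, hbc, hcd, hda, hab.symm, hbc.symm, hcd.symm, hda.symm, hac, hbd,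
      H.adj_comm _ a, H.adj_comm d b] <;> decide

theorem IsInducedP4.nonempty_pathGraph_embedding {H : SimpleGraph V} {a b c d : V}
    (h : IsInducedP4 H a b c d) : Nonempty (pathGraph 4 ↪g H) := by
  obtain ⟨⟨hab', hac', had', hbc', hbd', hcd'⟩, hab, hbc, hcd, hac, had, hbd⟩ := h
  refine ⟨⟨⟨![a, b, c, d], injective_vecCons_four hab' hac' had' hbc' hbd' hcd'⟩,
    fun {i j} => ?_⟩⟩
  fin_cases i <;> fin_cases j <;>
    simp [pathGraph_adj, hab, hbc, hcd, hab.symm, hbc.symm, hcd.symm, had, hac, hbd,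
      H.adj_comm _ a, H.adj_comm d b]

theorem IsInducedP4.exists_mem_fivePairs_of_isEmpty [DecidableEq V] {G : SimpleGraph V}
    {E : Set (Sym2 V)} {a b c d : V} (hP : IsInducedP4 G a b c d)
    (hC4 : IsEmpty (cycleGraph 4 ↪g editGraph G E))
    (hP4 : IsEmpty (pathGraph 4 ↪g editGraph G E)) :
    ∃ p ∈ fivePairs (a, b, c, d), p ∈ E := by
  obtain ⟨⟨hab', hac', had', hbc', hbd', hcd'⟩, hab, hbc, hcd, hac, had, hbd⟩ := hP
  by_contra! hE
  have unedited {x y : V} (hxy : x ≠ y) (hp : s(x, y) ∈ fivePairs (a, b, c, d)) :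
      (editGraph G E).Adj x y ↔ G.Adj x y :=
    editGraph_adj_of_notMem hxy (hE _ hp)
  have hab₁ := (unedited hab' (by simp [fivePairs])).2 hab
  have hbc₁ := (unedited hbc' (by simp [fivePairs])).2 hbc
  have hcd₁ := (unedited hcd' (by simp [fivePairs])).2 hcd
  have hac₁ := (unedited hac' (by simp [fivePairs])).not.2 hac
  have hbd₁ := (unedited hbd' (by simp [fivePairs])).not.2 hbd
  by_cases hadE : s(a, d) ∈ E
  · have hda₁ := ((editGraph_adj_of_mem had' hadE).2 had).symm
    exact hC4.false (nonempty_cycleGraph_four_embedding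
      (injective_vecCons_four hab' hac' had' hbc' hbd' hcd') hab₁ hbc₁ hcd₁ hda₁ hac₁ hbd₁).some
  · have had₁ := (editGraph_adj_of_notMem had' hadE).not.2 had
    exact hP4.false (IsInducedP4.nonempty_pathGraph_embedding
      ⟨⟨hab', hac', had', hbc', hbd', hcd'⟩, hab₁, hbc₁, hcd₁, hac₁, had₁, hbd₁⟩).some

end

theorem p4_packing_shared_endpoints_general {V : Type*} [DecidableEq V]
    (G : SimpleGraph V) (S : Finset (V × V × V × V))
    (hind : ∀ t ∈ S, ∀ a b c d : V, t = (a, b, c, d) →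
      (a ≠ b ∧ a ≠ c ∧ a ≠ d ∧ b ≠ c ∧ b ≠ d ∧ c ≠ d) ∧
      G.Adj a b ∧ G.Adj b c ∧ G.Adj c d ∧ ¬ G.Adj a c ∧ ¬ G.Adj a d ∧ ¬ G.Adj b d)
    (hdisj : ∀ t ∈ S, ∀ t' ∈ S, t ≠ t' → Disjoint (fivePairs t) (fivePairs t'))
    (E : Finset (Sym2 V))
    (hfree :
      IsEmpty (SimpleGraph.cycleGraph 4 ↪g editGraph G (E : Set (Sym2 V))) ∧
      IsEmpty (SimpleGraph.pathGraph 4 ↪g editGraph G (E : Set (Sym2 V)))) :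
    S.card ≤ E.card := by
  refine card_le_card_of_forall_not_disjoint (fun t ht t' ht' h => hdisj t ht t' ht' h) ?_
  rintro ⟨a, b, c, d⟩ ht
  obtain ⟨p, hp, hpE⟩ :=
    IsInducedP4.exists_mem_fivePairs_of_isEmpty (hind _ ht a b c d rfl) hfree.1 hfree.2
  exact not_disjoint_iff.2 ⟨p, hp, hpE⟩

/-- Packing lower bound with shared endpoint pairs: a family of induced `P₄`s whose
five non-endpoint pair sets are pairwise disjoint gives a lower bound on any edit set
making `G` `{C₄, P₄}`-free. -/
theorem p4_packing_shared_endpoints {V : Type*} [Fintype V] [DecidableEq V]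
    (G : SimpleGraph V) (S : Finset (V × V × V × V))
    (hind : ∀ t ∈ S, ∀ a b c d : V, t = (a, b, c, d) →
      (a ≠ b ∧ a ≠ c ∧ a ≠ d ∧ b ≠ c ∧ b ≠ d ∧ c ≠ d) ∧
      G.Adj a b ∧ G.Adj b c ∧ G.Adj c d ∧ ¬ G.Adj a c ∧ ¬ G.Adj a d ∧ ¬ G.Adj b d)
    (hdisj : ∀ t ∈ S, ∀ t' ∈ S, t ≠ t' → Disjoint (fivePairs t) (fivePairs t'))
    (E : Finset (Sym2 V))
    (hfree :
      IsEmpty (SimpleGraph.cycleGraph 4 ↪g editGraph G (E : Set (Sym2 V))) ∧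
      IsEmpty (SimpleGraph.pathGraph 4 ↪g editGraph G (E : Set (Sym2 V)))) :
    S.card ≤ E.card :=
  p4_packing_shared_endpoints_general G S hind hdisj E hfree
end
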